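/- arXiv:1401.0557 — 2 statements merged into one kernel-verified Lean document; each statement's English description precedes it below -/
import Mathlib

section
/- Let α ∈ ℝ, ε ∈ (0,1], θ > 0 and κ ∈ (0,1) satisfy a⁺(x) ≤ θ a⁻(x) for a.e. x and e^{α} θ ≤ κ. Let G = (G^{(n)})_{n≥0} be a pre-dual element with G^{(n)} ≥ 0 a.e. for every n, and with Σ_{n≥0} (e^{−nα}/n!) ‖E⁻ G^{(n)}‖_{L¹} < ∞ and Σ_{n≥0} (e^{−nα}/n!) ‖E⁺ G^{(n)}‖_{L¹} < ∞. Then Σ_{n≥0} (e^{−nα}/n!) ∫_{(ℝ^d)^n} ((Â⁽¹⁾_ε G)^{(n)} + κ^{−1} (Â⁽²⁾_ε G)^{(n)})(x₁,…,xₙ) dx₁⋯dxₙ ≤ 0. -/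
open MeasureTheory Filter Set Topology
open scoped ENNReal

noncomputable section

abbrev Rd (d : ℕ) := Fin d → ℝ

/-- pre-dual elements: sequences `G = (G^{(n)})_{n ≥ 0}` -/
abbrev PreDual (d : ℕ) := (n : ℕ) → (Fin n → Rd d) → ℝ

/-- the pre-dual norm `‖G‖_α = Σ_n (e^{−nα}/n!) ‖G^{(n)}‖_{L¹}`, with values in `ℝ≥0∞`. -/
def gnorm {d : ℕ} (α : ℝ) (G : PreDual d) : ℝ≥0∞ :=
  ∑' n : ℕ, ENNReal.ofReal (Real.exp (-(n : ℝ) * α) / n.factorial) *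
    eLpNorm (G n) 1 volume

/-- `E^±(x₁,…,xₙ) = Σ_{i ≠ j} a^±(x_i − x_j)` -/
def Efun {d : ℕ} (a : Rd d → ℝ) (n : ℕ) (x : Fin n → Rd d) : ℝ :=
  ∑ i, ∑ j ∈ Finset.univ.erase i, a (x i - x j)

/-- `(Â⁽¹⁾_ε G)^{(n)} = −(mn + ε E⁻) G^{(n)}` -/
def A1hat {d : ℕ} (m ε : ℝ) (am : Rd d → ℝ) (G : PreDual d) : PreDual d :=
  fun n x => -(m * n + ε * Efun am n x) * G n x

/-- `(Â⁽²⁾_ε G)^{(n)}(x₁,…,xₙ) = ε ∫ (Σ_i a⁺(y−x_i)) G^{(n+1)}(x₁,…,xₙ,y) dy` -/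
def A2hat {d : ℕ} (ε : ℝ) (ap : Rd d → ℝ) (G : PreDual d) : PreDual d :=
  fun n x => ε * ∫ y : Rd d, (∑ i, ap (y - x i)) * G (n + 1) (Fin.snoc x y)

/-!
Write `M n = ∫ E⁻ G⁽ⁿ⁾` and `P n = ∫ E⁺ G⁽ⁿ⁾`. The mass term only helps, so
`∫ (Â⁽¹⁾_ε G)⁽ⁿ⁾ ≤ -ε M n`. By Fubini and the permutation symmetry of `G⁽ⁿ⁺¹⁾`, all `(n+1) n`
pair terms of `P (n+1)` have the same integral, and `∫ (Â⁽²⁾_ε G)⁽ⁿ⁾` collects `n` of them, so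
`(n+1) ∫ (Â⁽²⁾_ε G)⁽ⁿ⁾ = ε P (n+1)`. As `e^{-nα}/(n! (n+1)) = e^α e^{-(n+1)α}/(n+1)!`, the series
is at most `-ε Σ wₙ Mₙ + κ⁻¹ ε e^α Σ wₙ Pₙ`, and `Pₙ ≤ θ Mₙ` with `e^α θ ≤ κ` makes it `≤ 0`.
-/

theorem exists_perm_apply_eq_of_ne {α : Type*} [DecidableEq α] {i j k l : α}
    (hij : i ≠ j) (hkl : k ≠ l) : ∃ σ : Equiv.Perm α, σ k = i ∧ σ l = j := by
  set τ := Equiv.swap k i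
  have hτl : τ l ≠ i := fun h => hkl (τ.injective (h.trans (Equiv.swap_apply_left k i).symm)).symm
  refine ⟨τ.trans (Equiv.swap (τ l) j), ?_, Equiv.swap_apply_left _ _⟩
  simp only [Equiv.trans_apply, τ, Equiv.swap_apply_left]
  exact Equiv.swap_apply_of_ne_of_ne hτl.symm hij

section PiMeasure

variable {E : Type*} [MeasurableSpace E] (μ : Measure E) [SigmaFinite μ]

theorem integral_comp_perm {ι : Type*} [Fintype ι] (σ : Equiv.Perm ι) (f : (ι → E) → ℝ) :
    ∫ x, f (x ∘ σ) ∂(Measure.pi fun _ => μ) = ∫ x, f x ∂(Measure.pi fun _ => μ) :=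
  (measurePreserving_piCongrLeft (fun _ : ι => μ) σ).symm.integral_comp' f

theorem measurePreserving_snoc {n : ℕ} :
    MeasurePreserving (fun p : E × (Fin n → E) => (Fin.snoc p.2 p.1 : Fin (n + 1) → E))
      (μ.prod (Measure.pi fun _ => μ)) (Measure.pi fun _ => μ) := by
  convert (measurePreserving_piFinSuccAbove (fun _ => μ) (Fin.last n)).symm using 1
  funext p
  exact (Fin.insertNth_last' p.1 p.2).symm

theorem integrable_integral_snoc {n : ℕ} {F : (Fin (n + 1) → E) → ℝ}
    (hF : Integrable F (Measure.pi fun _ => μ)) :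
    Integrable (fun x => ∫ y, F (Fin.snoc x y) ∂μ) (Measure.pi fun _ => μ) :=
  ((measurePreserving_snoc μ).integrable_comp_of_integrable hF).integral_prod_right

theorem integral_integral_snoc {n : ℕ} {F : (Fin (n + 1) → E) → ℝ}
    (hF : Integrable F (Measure.pi fun _ => μ)) :
    ∫ x, ∫ y, F (Fin.snoc x y) ∂μ ∂(Measure.pi fun _ => μ) = ∫ z, F z ∂(Measure.pi fun _ => μ) := by
  have hmp := measurePreserving_snoc μ (n := n)
  rw [← hmp.map_eq,
    integral_map hmp.measurable.aemeasurable (hmp.map_eq ▸ hF.aestronglyMeasurable)]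
  exact (integral_prod_symm _ (hmp.integrable_comp_of_integrable hF)).symm

theorem integral_comp_sub_mul_eq_of_perm_invariant [Sub E] {ι : Type*} [Fintype ι]
    [DecidableEq ι] {g : (ι → E) → ℝ} (hg : ∀ (σ : Equiv.Perm ι) x, g (x ∘ σ) = g x)
    (a : E → ℝ) {i j k l : ι} (hij : i ≠ j) (hkl : k ≠ l) :
    ∫ x, a (x i - x j) * g x ∂(Measure.pi fun _ => μ)
      = ∫ x, a (x k - x l) * g x ∂(Measure.pi fun _ => μ) := by
  obtain ⟨σ, hσk, hσl⟩ := exists_perm_apply_eq_of_ne hij hkl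
  conv_rhs => rw [← integral_comp_perm μ σ]
  simp only [Function.comp_apply, hσk, hσl, hg]

variable [AddGroup E] [MeasurableAdd E] [MeasurableSub₂ E] [μ.IsAddRightInvariant]

theorem quasiMeasurePreserving_eval_sub_eval {n : ℕ} {i j : Fin n} (hij : i ≠ j) :
    Measure.QuasiMeasurePreserving (fun x : Fin n → E => x i - x j)
      (Measure.pi fun _ => μ) μ := by
  obtain ⟨k, rfl⟩ : ∃ k, n = k + 1 := Nat.exists_eq_succ_of_ne_zero i.pos.ne'
  obtain ⟨j, rfl⟩ := Fin.exists_succAbove_eq hij.symm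
  have hsplit : Measure.QuasiMeasurePreserving (fun p : E × (Fin k → E) => p.1 - p.2 j)
      (μ.prod (Measure.pi fun _ => μ)) μ :=
    QuasiMeasurePreserving.prod_of_left (by fun_prop)
      (Eventually.of_forall fun r => (measurePreserving_sub_right μ (r j)).quasiMeasurePreserving)
  exact hsplit.comp
    (measurePreserving_piFinSuccAbove (fun _ => μ) i).quasiMeasurePreserving

theorem ae_forall_eval_sub_eval {n : ℕ} {Q : E → Prop} (hQ : ∀ᵐ u ∂μ, Q u) :
    ∀ᵐ x ∂(Measure.pi fun _ : Fin n => μ), ∀ i j, i ≠ j → Q (x i - x j) := by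
  simp only [ae_all_iff, eventually_imp_distrib_left]
  exact fun i j hij => (quasiMeasurePreserving_eval_sub_eval μ hij).ae hQ

end PiMeasure

section WeightedSeries

variable {X : ℕ → Type*} [∀ n, MeasurableSpace (X n)] {μ : ∀ n, Measure (X n)}
  {w : ℕ → ℝ} {f : ∀ n, X n → ℝ}

theorem integrable_of_tsum_ofReal_mul_eLpNorm_lt_top (n : ℕ) (hw : 0 < w n)
    (hf : AEStronglyMeasurable (f n) (μ n))
    (h : ∑' n, ENNReal.ofReal (w n) * eLpNorm (f n) 1 (μ n) < ⊤) : Integrable (f n) (μ n) :=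
  memLp_one_iff_integrable.mp ⟨hf, ENNReal.lt_top_of_mul_ne_top_right
    (ENNReal.lt_top_of_tsum_ne_top h.ne n).ne (ENNReal.ofReal_pos.2 hw).ne'⟩

theorem summable_mul_integral_of_tsum_ofReal_mul_eLpNorm_lt_top (hw : ∀ n, 0 ≤ w n)
    (h : ∑' n, ENNReal.ofReal (w n) * eLpNorm (f n) 1 (μ n) < ⊤) :
    Summable fun n => w n * ∫ x, f n x ∂μ n := by
  refine (ENNReal.summable_toReal h.ne).of_norm_bounded fun n => ?_
  rw [norm_mul, Real.norm_of_nonneg (hw n), ENNReal.toReal_mul, ENNReal.toReal_ofReal (hw n),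
    eLpNorm_one_eq_lintegral_enorm]
  exact mul_le_mul_of_nonneg_left
    (by simpa only [ofReal_norm] using norm_integral_le_lintegral_norm (f n)) (hw n)

end WeightedSeries

def weight (α : ℝ) (n : ℕ) : ℝ := Real.exp (-(n : ℝ) * α) / n.factorial

theorem weight_pos (α : ℝ) (n : ℕ) : 0 < weight α n := by
  unfold weight; positivity

theorem weight_div_succ (α : ℝ) (n : ℕ) :
    weight α n / (n + 1) = Real.exp α * weight α (n + 1) := by
  unfold weight
  rw [Nat.factorial_succ, Nat.cast_mul, Nat.cast_succ, neg_mul, neg_mul, Real.exp_neg, Real.exp_neg,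
    add_mul, one_mul, Real.exp_add]
  field_simp

theorem tsum_weight_mul_le_zero {α ε θ κ : ℝ} {T M P : ℕ → ℝ} (hε : 0 ≤ ε) (hκ : 0 < κ)
    (hκθ : Real.exp α * θ ≤ κ) (hM : ∀ n, 0 ≤ M n) (hPM : ∀ n, P n ≤ θ * M n) (hP0 : P 0 = 0)
    (hsM : Summable fun n => weight α n * M n) (hsP : Summable fun n => weight α n * P n)
    (hT : ∀ n, T n ≤ -ε * M n + κ⁻¹ * (ε * P (n + 1) / (n + 1))) :
    ∑' n, weight α n * T n ≤ 0 := by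
  by_cases hsT : Summable fun n => weight α n * T n
  swap
  · -- a non-summable `tsum` is `0`
    rw [tsum_eq_zero_of_not_summable hsT]
  set c := κ⁻¹ * ε * Real.exp α
  have hsP' : Summable fun n => weight α (n + 1) * P (n + 1) := (summable_nat_add_iff 1).2 hsP
  have hbound : ∀ n, weight α n * T n
      ≤ -ε * (weight α n * M n) + c * (weight α (n + 1) * P (n + 1)) := fun n => by
    calc weight α n * T n ≤ weight α n * (-ε * M n + κ⁻¹ * (ε * P (n + 1) / (n + 1))) :=
          mul_le_mul_of_nonneg_left (hT n) (weight_pos α n).le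
      _ = -ε * (weight α n * M n) + κ⁻¹ * ε * P (n + 1) * (weight α n / (n + 1)) := by ring
      _ = -ε * (weight α n * M n) + c * (weight α (n + 1) * P (n + 1)) := by
          rw [weight_div_succ]; ring
  have hshift : ∑' n, weight α (n + 1) * P (n + 1) = ∑' n, weight α n * P n := by
    rw [hsP.tsum_eq_zero_add, hP0, mul_zero, zero_add]
  have hPM' : ∑' n, weight α n * P n ≤ θ * ∑' n, weight α n * M n := by
    rw [← tsum_mul_left]
    exact hsP.tsum_le_tsum (fun n =>
      (mul_le_mul_of_nonneg_left (hPM n) (weight_pos α n).le).trans_eq (mul_left_comm _ _ _))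
      (hsM.mul_left θ)
  have hcθ : c * θ ≤ ε :=
    calc c * θ = κ⁻¹ * ε * (Real.exp α * θ) := by ring
      _ ≤ κ⁻¹ * ε * κ := by gcongr
      _ = ε := by field_simp
  have hSM : 0 ≤ ∑' n, weight α n * M n :=
    tsum_nonneg fun n => mul_nonneg (weight_pos α n).le (hM n)
  calc ∑' n, weight α n * T n
      ≤ ∑' n, (-ε * (weight α n * M n) + c * (weight α (n + 1) * P (n + 1))) :=
        hsT.tsum_le_tsum hbound ((hsM.mul_left _).add (hsP'.mul_left _))
    _ = -ε * ∑' n, weight α n * M n + c * ∑' n, weight α n * P n := by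
        rw [(hsM.mul_left _).tsum_add (hsP'.mul_left _), tsum_mul_left, tsum_mul_left, hshift]
    _ ≤ 0 := by
        have hc : 0 ≤ c := by positivity
        nlinarith [mul_le_mul_of_nonneg_left hPM' hc, mul_le_mul_of_nonneg_right hcθ hSM]

section PairInteraction

variable {d : ℕ}

theorem Efun_nonneg {a : Rd d → ℝ} {n : ℕ} {x : Fin n → Rd d}
    (ha : ∀ i j, i ≠ j → 0 ≤ a (x i - x j)) : 0 ≤ Efun a n x :=
  Finset.sum_nonneg fun i _ => Finset.sum_nonneg fun j hj => ha i j (Finset.ne_of_mem_erase hj).symm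

theorem le_Efun {a : Rd d → ℝ} {n : ℕ} {x : Fin n → Rd d}
    (ha : ∀ i j, i ≠ j → 0 ≤ a (x i - x j)) {i j : Fin n} (hij : i ≠ j) :
    a (x i - x j) ≤ Efun a n x := by
  have hrow : ∀ i, 0 ≤ ∑ j ∈ Finset.univ.erase i, a (x i - x j) := fun i =>
    Finset.sum_nonneg fun j hj => ha i j (Finset.ne_of_mem_erase hj).symm
  calc a (x i - x j) ≤ ∑ j ∈ Finset.univ.erase i, a (x i - x j) :=
        Finset.single_le_sum (f := fun j => a (x i - x j))
          (fun j hj => ha i j (Finset.ne_of_mem_erase hj).symm)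
          (Finset.mem_erase.2 ⟨hij.symm, Finset.mem_univ j⟩)
    _ ≤ Efun a n x :=
        Finset.single_le_sum (f := fun i => ∑ j ∈ Finset.univ.erase i, a (x i - x j))
          (fun i _ => hrow i) (Finset.mem_univ i)

theorem Efun_le_mul_Efun {a b : Rd d → ℝ} {θ : ℝ} {n : ℕ} {x : Fin n → Rd d}
    (hab : ∀ i j, i ≠ j → a (x i - x j) ≤ θ * b (x i - x j)) :
    Efun a n x ≤ θ * Efun b n x := by
  simp only [Efun, Finset.mul_sum]
  exact Finset.sum_le_sum fun i _ => Finset.sum_le_sum fun j hj =>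
    hab i j (Finset.ne_of_mem_erase hj).symm

theorem Efun_mul_eq_sum (a : Rd d → ℝ) (n : ℕ) (x : Fin n → Rd d) (c : ℝ) :
    Efun a n x * c = ∑ i, ∑ j ∈ Finset.univ.erase i, a (x i - x j) * c := by
  simp only [Efun, Finset.sum_mul]

theorem aestronglyMeasurable_Efun {a : Rd d → ℝ} (ha : AEStronglyMeasurable a volume) (n : ℕ) :
    AEStronglyMeasurable (Efun a n) volume :=
  Finset.aestronglyMeasurable_fun_sum _ fun _ _ => Finset.aestronglyMeasurable_fun_sum _
    fun _ hj => ha.comp_quasiMeasurePreserving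
      (quasiMeasurePreserving_eval_sub_eval volume (Finset.ne_of_mem_erase hj).symm)

theorem ae_Efun_nonneg {a : Rd d → ℝ} (ha : ∀ᵐ u ∂volume, 0 ≤ a u) (n : ℕ) :
    ∀ᵐ x ∂(volume : Measure (Fin n → Rd d)), 0 ≤ Efun a n x := by
  filter_upwards [ae_forall_eval_sub_eval volume ha] with x hx using Efun_nonneg hx

theorem integral_Efun_mul_nonneg {a : Rd d → ℝ} {n : ℕ} {g : (Fin n → Rd d) → ℝ}
    (ha : ∀ᵐ u ∂volume, 0 ≤ a u) (hg : ∀ᵐ x ∂volume, 0 ≤ g x) :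
    0 ≤ ∫ x, Efun a n x * g x :=
  integral_nonneg_of_ae <| by
    filter_upwards [ae_Efun_nonneg ha n, hg] with x h1 h2 using mul_nonneg h1 h2

theorem integral_Efun_mul_le_mul {a b : Rd d → ℝ} {θ : ℝ} {n : ℕ} {g : (Fin n → Rd d) → ℝ}
    (hab : ∀ᵐ u ∂volume, a u ≤ θ * b u) (hg : ∀ᵐ x ∂volume, 0 ≤ g x)
    (ha : Integrable (fun x => Efun a n x * g x)) (hb : Integrable (fun x => Efun b n x * g x)) :
    ∫ x, Efun a n x * g x ≤ θ * ∫ x, Efun b n x * g x := by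
  rw [← integral_const_mul]
  refine integral_mono_ae ha (hb.const_mul θ) ?_
  filter_upwards [ae_forall_eval_sub_eval volume hab, hg] with x hx hgx
  calc Efun a n x * g x ≤ θ * Efun b n x * g x :=
        mul_le_mul_of_nonneg_right (Efun_le_mul_Efun hx) hgx
    _ = θ * (Efun b n x * g x) := mul_assoc _ _ _

theorem integrable_comp_sub_mul_of_integrable_Efun_mul {a : Rd d → ℝ} {n : ℕ}
    {g : (Fin n → Rd d) → ℝ} (ha : AEStronglyMeasurable a volume) (ha0 : ∀ᵐ u ∂volume, 0 ≤ a u)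
    (hg : AEStronglyMeasurable g volume) (hE : Integrable (fun x => Efun a n x * g x))
    {i j : Fin n} (hij : i ≠ j) :
    Integrable (fun x => a (x i - x j) * g x) := by
  refine hE.mono ((ha.comp_quasiMeasurePreserving
    (quasiMeasurePreserving_eval_sub_eval volume hij)).mul hg) ?_
  filter_upwards [ae_forall_eval_sub_eval volume ha0] with x hx
  rw [norm_mul, norm_mul, Real.norm_of_nonneg (hx i j hij),
    Real.norm_of_nonneg (Efun_nonneg hx)]
  exact mul_le_mul_of_nonneg_right (le_Efun hx hij) (norm_nonneg _)

theorem integral_Efun_mul_succ {a : Rd d → ℝ} {n : ℕ} {g : (Fin (n + 1) → Rd d) → ℝ}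
    (hg : ∀ (σ : Equiv.Perm (Fin (n + 1))) x, g (x ∘ σ) = g x)
    (hpair : ∀ i j, i ≠ j → Integrable (fun x => a (x i - x j) * g x)) :
    ∫ x, Efun a (n + 1) x * g x
      = (n + 1) * n * ∫ x, a (x (Fin.last n) - x 0) * g x := by
  -- for `n = 0` the pair `(last 0, 0)` is degenerate, but then the factor `n` vanishes
  have hc : ∀ i j : Fin (n + 1), i ≠ j → ∫ x, a (x i - x j) * g x
      = ∫ x, a (x (Fin.last n) - x 0) * g x := fun i j hij => by
    have hn : n ≠ 0 := by rintro rfl; exact hij (Fin.ext (by omega))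
    exact integral_comp_sub_mul_eq_of_perm_invariant volume hg a hij
      fun h => hn (by simpa using congrArg Fin.val h)
  have hrow : ∀ i, ∀ j ∈ Finset.univ.erase i, Integrable (fun x => a (x i - x j) * g x) :=
    fun i j hj => hpair i j (Finset.ne_of_mem_erase hj).symm
  simp_rw [Efun_mul_eq_sum]
  rw [integral_finsetSum _ fun i _ => integrable_finsetSum _ (hrow i)]
  simp_rw [integral_finsetSum _ (hrow _)]
  rw [Finset.sum_congr rfl fun i _ => Finset.sum_congr rfl fun j hj =>
    hc i j (Finset.ne_of_mem_erase hj).symm]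
  simp only [Finset.sum_const, Finset.mem_univ, Finset.card_erase_of_mem, Finset.card_univ,
    Fintype.card_fin, add_tsub_cancel_right, nsmul_eq_mul, Nat.cast_add, Nat.cast_one]
  ring

end PairInteraction

section Generator

variable {d : ℕ} {G : PreDual d} {n : ℕ}

theorem A1hat_eq (m ε : ℝ) (a : Rd d → ℝ) (x : Fin n → Rd d) :
    A1hat m ε a G n x = -(m * n) * G n x + -ε * (Efun a n x * G n x) := by
  unfold A1hat; ring

theorem integrable_A1hat (m ε : ℝ) {a : Rd d → ℝ} (hG : Integrable (G n))
    (hE : Integrable (fun x => Efun a n x * G n x)) :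
    Integrable (A1hat m ε a G n) := by
  simp_rw [funext (A1hat_eq (G := G) m ε a)]
  exact (hG.const_mul _).add (hE.const_mul _)

theorem integral_A1hat_le {m : ℝ} (hm : 0 ≤ m) (ε : ℝ) {a : Rd d → ℝ} (hG : Integrable (G n))
    (hG0 : ∀ᵐ x ∂volume, 0 ≤ G n x) (hE : Integrable (fun x => Efun a n x * G n x)) :
    ∫ x, A1hat m ε a G n x ≤ -ε * ∫ x, Efun a n x * G n x := by
  simp_rw [A1hat_eq]
  rw [integral_add (hG.const_mul _) (hE.const_mul _), integral_const_mul, integral_const_mul]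
  have : 0 ≤ m * n * ∫ x, G n x := by
    have := integral_nonneg_of_ae hG0
    positivity
  linarith

theorem A2hat_eq_integral_snoc (ε : ℝ) (a : Rd d → ℝ) :
    A2hat ε a G n = fun x => ε * ∫ y, (fun z : Fin (n + 1) → Rd d =>
      ∑ i : Fin n, a (z (Fin.last n) - z i.castSucc) * G (n + 1) z) (Fin.snoc x y) := by
  funext x
  simp only [A2hat, Fin.snoc_last, Fin.snoc_castSucc, Finset.sum_mul]

theorem integrable_A2hat (ε : ℝ) {a : Rd d → ℝ}
    (hpair : ∀ i j : Fin (n + 1), i ≠ j → Integrable (fun x => a (x i - x j) * G (n + 1) x)) :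
    Integrable (A2hat ε a G n) := by
  rw [A2hat_eq_integral_snoc]
  exact (integrable_integral_snoc volume (integrable_finsetSum _ fun i _ =>
    hpair _ _ (Fin.castSucc_lt_last i).ne')).const_mul ε

theorem integral_A2hat (ε : ℝ) {a : Rd d → ℝ}
    (hG : ∀ (σ : Equiv.Perm (Fin (n + 1))) x, G (n + 1) (x ∘ σ) = G (n + 1) x)
    (hpair : ∀ i j : Fin (n + 1), i ≠ j → Integrable (fun x => a (x i - x j) * G (n + 1) x)) :
    (n + 1) * ∫ x, A2hat ε a G n x = ε * ∫ x, Efun a (n + 1) x * G (n + 1) x := by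
  have hterm : ∀ i : Fin n, Integrable
      (fun z => a (z (Fin.last n) - z i.castSucc) * G (n + 1) z) :=
    fun i => hpair _ _ (Fin.castSucc_lt_last i).ne'
  have hsum : Integrable
      (fun z => ∑ i : Fin n, a (z (Fin.last n) - z i.castSucc) * G (n + 1) z) :=
    integrable_finsetSum _ fun i _ => hterm i
  have hc : ∀ i : Fin n, ∫ z, a (z (Fin.last n) - z i.castSucc) * G (n + 1) z
      = ∫ z, a (z (Fin.last n) - z 0) * G (n + 1) z := fun i =>
    integral_comp_sub_mul_eq_of_perm_invariant volume hG a (Fin.castSucc_lt_last i).ne'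
      fun h => i.pos.ne' (by simpa using congrArg Fin.val h)
  calc (n + 1) * ∫ x, A2hat ε a G n x
      = (n + 1) * (ε * ∫ z, ∑ i : Fin n, a (z (Fin.last n) - z i.castSucc) * G (n + 1) z) := by
        rw [A2hat_eq_integral_snoc, integral_const_mul]
        exact congrArg _ (congrArg _ (integral_integral_snoc volume hsum))
    _ = ε * ∫ x, Efun a (n + 1) x * G (n + 1) x := by
        rw [integral_finsetSum _ fun i _ => hterm i, Finset.sum_congr rfl fun i _ => hc i,
          integral_Efun_mul_succ hG hpair, Finset.sum_const, Finset.card_univ, Fintype.card_fin,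
          nsmul_eq_mul]
        ring

end Generator

theorem statement6_general
    (d : ℕ) (m : ℝ) (hm : 0 ≤ m)
    (aplus aminus : Rd d → ℝ)
    (hap_int : Integrable aplus volume) (ham_int : Integrable aminus volume)
    (hap_pos : ∀ᵐ x ∂volume, 0 ≤ aplus x)
    (ham_pos : ∀ᵐ x ∂volume, 0 ≤ aminus x)
    (α : ℝ) (ε : ℝ) (hε : ε ∈ Set.Ioc (0 : ℝ) 1)
    (θ : ℝ) (κ : ℝ) (hκ : κ ∈ Set.Ioo (0 : ℝ) 1)
    (hdom : ∀ᵐ x ∂volume, aplus x ≤ θ * aminus x)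
    (hκθ : Real.exp α * θ ≤ κ)
    (G : PreDual d)
    (hG_int : ∀ n, Integrable (G n) volume)
    (hG_symm : ∀ n (σ : Equiv.Perm (Fin n)) (x : Fin n → Rd d), G n (x ∘ σ) = G n x)
    (hG_pos : ∀ n, ∀ᵐ x ∂(volume : Measure (Fin n → Rd d)), 0 ≤ G n x)
    (hGEm : ∑' n : ℕ, ENNReal.ofReal (Real.exp (-(n : ℝ) * α) / n.factorial) *
        eLpNorm (fun x => Efun aminus n x * G n x) 1 volume < ⊤)
    (hGEp : ∑' n : ℕ, ENNReal.ofReal (Real.exp (-(n : ℝ) * α) / n.factorial) *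
        eLpNorm (fun x => Efun aplus n x * G n x) 1 volume < ⊤) :
    (∑' n : ℕ, (Real.exp (-(n : ℝ) * α) / n.factorial) *
        ∫ x : Fin n → Rd d, (A1hat m ε aminus G n x + κ⁻¹ * A2hat ε aplus G n x)) ≤ 0 := by
  have hE : ∀ a : Rd d → ℝ, Integrable a →
      ∑' n : ℕ, ENNReal.ofReal (weight α n) * eLpNorm (fun x => Efun a n x * G n x) 1 volume < ⊤ →
      ∀ n, Integrable (fun x => Efun a n x * G n x) := fun a ha h n =>
    integrable_of_tsum_ofReal_mul_eLpNorm_lt_top n (weight_pos α n)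
      ((aestronglyMeasurable_Efun ha.1 n).mul (hG_int n).1) h
  have hEm := hE aminus ham_int hGEm
  have hEp := hE aplus hap_int hGEp
  have hpair : ∀ n (i j : Fin n), i ≠ j → Integrable (fun x => aplus (x i - x j) * G n x) :=
    fun n _ _ hij => integrable_comp_sub_mul_of_integrable_Efun_mul hap_int.1 hap_pos
      (hG_int n).1 (hEp n) hij
  refine tsum_weight_mul_le_zero hε.1.le hκ.1 hκθ
    (fun n => integral_Efun_mul_nonneg ham_pos (hG_pos n))
    (fun n => integral_Efun_mul_le_mul hdom (hG_pos n) (hEp n) (hEm n)) (by simp [Efun])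
    (summable_mul_integral_of_tsum_ofReal_mul_eLpNorm_lt_top (fun n => (weight_pos α n).le) hGEm)
    (summable_mul_integral_of_tsum_ofReal_mul_eLpNorm_lt_top (fun n => (weight_pos α n).le) hGEp)
    fun n => ?_
  have hA2 : ∫ x, A2hat ε aplus G n x = ε * (∫ x, Efun aplus (n + 1) x * G (n + 1) x) / (n + 1) :=
    eq_div_of_mul_eq (by positivity)
      ((mul_comm _ _).trans (integral_A2hat ε (hG_symm (n + 1)) (hpair (n + 1))))
  rw [integral_add (integrable_A1hat m ε (hG_int n) (hEm n))
    ((integrable_A2hat ε (hpair (n + 1))).const_mul _), integral_const_mul, hA2]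
  exact add_le_add_left (integral_A1hat_le hm ε (hG_int n) (hG_pos n) (hEm n)) _

theorem statement6
    (d : ℕ) (hd : 1 ≤ d) (m : ℝ) (hm : 0 ≤ m)
    (aplus aminus : Rd d → ℝ)
    (hap_int : Integrable aplus volume) (ham_int : Integrable aminus volume)
    (hap_bdd : eLpNorm aplus ⊤ volume < ⊤) (ham_bdd : eLpNorm aminus ⊤ volume < ⊤)
    (hap_even : ∀ᵐ x ∂volume, aplus (-x) = aplus x)
    (ham_even : ∀ᵐ x ∂volume, aminus (-x) = aminus x)
    (hap_pos : ∀ᵐ x ∂volume, 0 ≤ aplus x)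
    (ham_pos : ∀ᵐ x ∂volume, 0 ≤ aminus x)
    (α : ℝ) (ε : ℝ) (hε : ε ∈ Set.Ioc (0 : ℝ) 1)
    (θ : ℝ) (hθ : 0 < θ) (κ : ℝ) (hκ : κ ∈ Set.Ioo (0 : ℝ) 1)
    (hdom : ∀ᵐ x ∂volume, aplus x ≤ θ * aminus x)
    (hκθ : Real.exp α * θ ≤ κ)
    (G : PreDual d)
    (hG_int : ∀ n, Integrable (G n) volume)
    (hG_symm : ∀ n (σ : Equiv.Perm (Fin n)) (x : Fin n → Rd d), G n (x ∘ σ) = G n x)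
    (hG_pos : ∀ n, ∀ᵐ x ∂(volume : Measure (Fin n → Rd d)), 0 ≤ G n x)
    (hGEm : ∑' n : ℕ, ENNReal.ofReal (Real.exp (-(n : ℝ) * α) / n.factorial) *
        eLpNorm (fun x => Efun aminus n x * G n x) 1 volume < ⊤)
    (hGEp : ∑' n : ℕ, ENNReal.ofReal (Real.exp (-(n : ℝ) * α) / n.factorial) *
        eLpNorm (fun x => Efun aplus n x * G n x) 1 volume < ⊤) :
    (∑' n : ℕ, (Real.exp (-(n : ℝ) * α) / n.factorial) *
        ∫ x : Fin n → Rd d, (A1hat m ε aminus G n x + κ⁻¹ * A2hat ε aplus G n x)) ≤ 0 :=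
  statement6_general d m hm aplus aminus hap_int ham_int hap_pos ham_pos α ε hε θ κ hκ hdom hκθ G
    hG_int hG_symm hG_pos hGEm hGEp
end
end

section
/- Assume there exists θ > 0 such that a⁺(x) ≤ θ a⁻(x) for a.e. x ∈ ℝ^d. (i) For every ρ₀ ∈ C_b(ℝ^d) with ρ₀ ≥ 0 there exists b > 0 such that 0 ≤ ρ_t(x) ≤ b for all t ≥ 0 and all x ∈ ℝ^d. (ii) If moreover 0 ≤ ρ₀(x) ≤ θ − δ for all x and some δ > 0, then 0 ≤ ρ_t(x) ≤ θ for all t > 0 and all x ∈ ℝ^d. -/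
/-
Write `u t = ‖ρ t‖_∞` and `K` for the right-hand side. Since `m ≥ 0` and `a⁺ ≤ θ a⁻`,
`K(ρ)(x) ≤ (a⁻ ∗ ρ)(x) (θ - ρ(x))`, so for small `h > 0` the Euler step `ρ t + h K(ρ t)` is,
pointwise, a convex combination of `ρ t x` and `θ`. As `ρ` is differentiable in `L∞`, this gives
`u (t + h) ≤ max (u t) θ + o(h)`; moreover `u` is continuous, so `t ↦ max (u t) θ` is
nonincreasing and `u t ≤ max (u 0) θ`. Finally `ρ t` is continuous, hence bounded everywhere by
its essential supremum.
-/

open MeasureTheory Filter Set Topology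
open scoped ENNReal

noncomputable section

/-- the convolution `(a ∗ ρ)(x) = ∫ a(x−y) ρ(y) dy` -/
def conv {d : ℕ} (a ρ : Rd d → ℝ) (x : Rd d) : ℝ := ∫ y : Rd d, a (x - y) * ρ y

/-- the right-hand side of the kinetic equation:
`−m ρ − (a⁻ ∗ ρ) ρ + (a⁺ ∗ ρ)`. -/
def KRHS {d : ℕ} (m : ℝ) (ap am : Rd d → ℝ) (ρ : Rd d → ℝ) : Rd d → ℝ :=
  fun x => -m * ρ x - conv am ρ x * ρ x + conv ap ρ x

/-- classical solution of the kinetic equation on the time set `I`, continuously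
differentiable with respect to the `L∞`-norm. -/
structure KinSol {d : ℕ} (m : ℝ) (ap am : Rd d → ℝ) (I : Set ℝ)
    (ρ0 : Rd d → ℝ) (ρ : ℝ → Rd d → ℝ) : Prop where
  init : ρ 0 =ᵐ[volume] ρ0
  meas : ∀ t ∈ I, AEStronglyMeasurable (ρ t) volume
  bdd : ∀ t ∈ I, eLpNorm (ρ t) ⊤ volume < ⊤
  hasDeriv : ∀ t ∈ I,
    Tendsto (fun h : ℝ =>
        eLpNorm (ρ (t + h) - ρ t - h • KRHS m ap am (ρ t)) ⊤ volume /
          ENNReal.ofReal |h|)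
      (𝓝[{h : ℝ | h ≠ 0 ∧ t + h ∈ I}] 0) (𝓝 0)
  contDeriv : ∀ t ∈ I,
    Tendsto (fun s : ℝ =>
        eLpNorm (KRHS m ap am (ρ s) - KRHS m ap am (ρ t)) ⊤ volume)
      (𝓝[I] t) (𝓝 0)

namespace MeasureTheory

variable {α E : Type*} {mα : MeasurableSpace α} {μ : Measure α} [NormedAddCommGroup E]

lemma lpNorm_top_le_of_ae_norm_le {f : α → E} {C : ℝ} (hC : 0 ≤ C)
    (h : ∀ᵐ x ∂μ, ‖f x‖ ≤ C) : lpNorm f ∞ μ ≤ C := by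
  by_cases hf : AEStronglyMeasurable f μ
  · rw [← toReal_eLpNorm hf, eLpNorm_exponent_top]
    exact ENNReal.toReal_le_of_le_ofReal hC (eLpNormEssSup_le_of_ae_bound h)
  · simpa [hf] using hC

lemma abs_lpNorm_sub_lpNorm_le {f g : α → E} {p : ℝ≥0∞} (hf : MemLp f p μ) (hg : MemLp g p μ)
    (hp : 1 ≤ p) : |lpNorm f p μ - lpNorm g p μ| ≤ lpNorm (f - g) p μ := by
  rw [abs_sub_le_iff, sub_le_iff_le_add', sub_le_iff_le_add']
  exact ⟨lpNorm_le_lpNorm_add_lpNorm_sub' hg hp, lpNorm_le_lpNorm_add_lpNorm_sub hf hp⟩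

lemma norm_le_lpNorm_top_of_continuous [TopologicalSpace α] [OpensMeasurableSpace α]
    [μ.IsOpenPosMeasure] {f : α → E} (hf : MemLp f ∞ μ) (hfc : Continuous f) (x : α) :
    ‖f x‖ ≤ lpNorm f ∞ μ := by
  have hnull : μ {y | lpNorm f ∞ μ < ‖f y‖} = 0 := by
    simpa only [not_le] using ae_iff.mp (ae_le_lpNorm_exponent_top hf)
  have hempty := ((isOpen_lt continuous_const hfc.norm).measure_eq_zero_iff μ).mp hnull
  exact not_lt.mp fun hx => hempty.subset hx

lemma eventually_ae_norm_sub_sub_smul_le [NormedSpace ℝ E] {f : ℝ → α → E} {g : α → E}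
    {I : Set ℝ} {t : ℝ}
    (hf : Tendsto (fun h : ℝ => eLpNorm (f (t + h) - f t - h • g) ⊤ μ / ENNReal.ofReal |h|)
      (𝓝[{h : ℝ | h ≠ 0 ∧ t + h ∈ I}] 0) (𝓝 0)) {ε : ℝ} (hε : 0 < ε) :
    ∀ᶠ s in 𝓝[I] t, ∀ᵐ x ∂μ, ‖f s x - f t x - (s - t) • g x‖ ≤ ε * |s - t| := by
  have hsmall := hf (Iio_mem_nhds (ENNReal.ofReal_pos.2 hε))
  rw [mem_map, mem_nhdsWithin_iff_eventually, Metric.eventually_nhds_iff] at hsmall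
  obtain ⟨r, hr, hball⟩ := hsmall
  rw [eventually_nhdsWithin_iff, Metric.eventually_nhds_iff]
  refine ⟨r, hr, fun s hs hsI => ?_⟩
  rcases eq_or_ne s t with rfl | hst
  · simp
  have hne : s - t ≠ 0 := sub_ne_zero.2 hst
  have hquot := hball (y := s - t) (by rwa [Real.dist_eq, sub_zero, ← Real.dist_eq])
    ⟨hne, by rwa [add_sub_cancel]⟩
  rw [Set.mem_preimage, Set.mem_Iio, add_sub_cancel, ENNReal.div_lt_iff
    (Or.inl (ENNReal.ofReal_pos.2 (abs_pos.2 hne)).ne') (Or.inl ENNReal.ofReal_ne_top),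
    ← ENNReal.ofReal_mul hε.le, eLpNorm_exponent_top] at hquot
  filter_upwards [ae_le_eLpNormEssSup (μ := μ) (f := f s - f t - (s - t) • g)] with x hx
  have := hx.trans hquot.le
  rwa [← ofReal_norm, ENNReal.ofReal_le_ofReal_iff (by positivity)] at this

end MeasureTheory

lemma image_le_left_of_eventually_le_add_mul {v : ℝ → ℝ} {a b : ℝ}
    (hv : ContinuousOn v (Icc a b))
    (hstep : ∀ x ∈ Ico a b, ∀ ε > 0, ∀ᶠ z in 𝓝[>] x, v z ≤ v x + ε * (z - x)) :
    ∀ x ∈ Icc a b, v x ≤ v a := by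
  refine image_le_of_liminf_slope_right_le_deriv_boundary hv le_rfl continuousOn_const
    (fun x _ => hasDerivWithinAt_const x _ (v a)) fun x hx r hr => ?_
  refine (((hstep x hx (r / 2) (half_pos hr)).and self_mem_nhdsWithin).mono
    fun z ⟨hz, hxz⟩ => ?_).frequently
  rw [slope_def_field, div_lt_iff₀ (sub_pos.2 hxz)]
  nlinarith [sub_pos.2 hxz]

lemma add_mul_sub_le_max {y θ k : ℝ} (hk₀ : 0 ≤ k) (hk₁ : k ≤ 1) : y + k * (θ - y) ≤ max y θ := by
  rcases le_total y θ with h | h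
  · rw [max_eq_right h]; nlinarith
  · rw [max_eq_left h]; nlinarith

section Convolution

variable {d : ℕ}

lemma ae_comp_sub_left {P : Rd d → Prop} (h : ∀ᵐ z, P z) (x : Rd d) : ∀ᵐ y, P (x - y) :=
  (Measure.measurePreserving_sub_left volume x).quasiMeasurePreserving.ae h

lemma integrable_conv_integrand {a f : Rd d → ℝ} (ha : Integrable a)
    (hf : AEStronglyMeasurable f) {U : ℝ} (hfU : ∀ᵐ y, |f y| ≤ U) (x : Rd d) :
    Integrable (fun y => a (x - y) * f y) := by
  simpa only [mul_comm] using ((integrable_comp_sub_left a x).mpr ha).bdd_mul (c := U) hf hfU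

lemma conv_nonneg {a f : Rd d → ℝ} (ha : ∀ᵐ z, 0 ≤ a z) (hf : ∀ᵐ y, 0 ≤ f y) (x : Rd d) :
    0 ≤ conv a f x := by
  refine integral_nonneg_of_ae ?_
  filter_upwards [ae_comp_sub_left ha x, hf] with y hay hfy
  exact mul_nonneg hay hfy

lemma conv_le_mul_conv {a b f : Rd d → ℝ} {θ : ℝ} (ha : Integrable a) (hb : Integrable b)
    (hab : ∀ᵐ z, a z ≤ θ * b z) (hf : AEStronglyMeasurable f) (hf₀ : ∀ᵐ y, 0 ≤ f y) {U : ℝ}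
    (hfU : ∀ᵐ y, |f y| ≤ U) (x : Rd d) : conv a f x ≤ θ * conv b f x := by
  rw [conv, conv, ← integral_const_mul]
  refine integral_mono_ae (integrable_conv_integrand ha hf hfU x)
    ((integrable_conv_integrand hb hf hfU x).const_mul θ) ?_
  filter_upwards [ae_comp_sub_left hab x, hf₀] with y haby hfy
  nlinarith

lemma abs_conv_le {a f : Rd d → ℝ} (ha : Integrable a) (hf : AEStronglyMeasurable f) {U : ℝ}
    (hfU : ∀ᵐ y, |f y| ≤ U) (x : Rd d) : |conv a f x| ≤ (∫ z, |a z|) * U := by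
  calc |conv a f x| ≤ ∫ y, |a (x - y) * f y| := abs_integral_le_integral_abs
    _ ≤ ∫ y, |a (x - y)| * U := by
        refine integral_mono_ae (integrable_conv_integrand ha hf hfU x).abs
          (((integrable_comp_sub_left a x).mpr ha).abs.mul_const U) ?_
        filter_upwards [hfU] with y hy
        rw [abs_mul]; gcongr
    _ = (∫ z, |a z|) * U := by
        rw [integral_mul_const, integral_sub_left_eq_self (fun z => |a z|) volume x]

end Convolution

section KineticRHS

variable {d : ℕ} {m θ : ℝ} {aplus aminus ρ : Rd d → ℝ}

lemma KRHS_le_conv_mul_sub (hm : 0 ≤ m) {x : Rd d} (hρ : 0 ≤ ρ x)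
    (hdom : conv aplus ρ x ≤ θ * conv aminus ρ x) :
    KRHS m aplus aminus ρ x ≤ conv aminus ρ x * (θ - ρ x) := by
  unfold KRHS
  nlinarith [mul_nonneg hm hρ]

lemma ae_abs_KRHS_le (hap : Integrable aplus) (ham : Integrable aminus)
    (hρ : AEStronglyMeasurable ρ) {U : ℝ} (hρU : ∀ᵐ y, |ρ y| ≤ U) :
    ∀ᵐ x, |KRHS m aplus aminus ρ x| ≤ (|m| + (∫ z, |aminus z|) * U + ∫ z, |aplus z|) * U := by
  filter_upwards [hρU] with x hx
  have hU : 0 ≤ U := (abs_nonneg _).trans hx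
  have hA := abs_conv_le ham hρ hρU x
  have hP := abs_conv_le hap hρ hρU x
  calc |KRHS m aplus aminus ρ x|
        = |-(m * ρ x) + -(conv aminus ρ x * ρ x) + conv aplus ρ x| := by
          unfold KRHS; congr 1; ring
    _ ≤ |m| * |ρ x| + |conv aminus ρ x| * |ρ x| + |conv aplus ρ x| := by
          simpa only [abs_neg, abs_mul] using
            abs_add_three (-(m * ρ x)) (-(conv aminus ρ x * ρ x)) (conv aplus ρ x)
    _ ≤ |m| * U + (∫ z, |aminus z|) * U * U + (∫ z, |aplus z|) * U := by gcongr
    _ = (|m| + (∫ z, |aminus z|) * U + ∫ z, |aplus z|) * U := by ring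

end KineticRHS

namespace KinSol

variable {d : ℕ} {m θ : ℝ} {aplus aminus ρ0 : Rd d → ℝ} {ρ : ℝ → Rd d → ℝ} {I : Set ℝ}

lemma memLp_top (hsol : KinSol m aplus aminus I ρ0 ρ) {t : ℝ} (ht : t ∈ I) :
    MemLp (ρ t) ∞ :=
  ⟨hsol.meas t ht, hsol.bdd t ht⟩

lemma ae_abs_le_lpNorm (hsol : KinSol m aplus aminus I ρ0 ρ) {t : ℝ} (ht : t ∈ I) :
    ∀ᵐ x, |ρ t x| ≤ lpNorm (ρ t) ∞ volume :=
  ae_le_lpNorm_exponent_top (hsol.memLp_top ht)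

lemma continuousWithinAt_lpNorm (hap : Integrable aplus) (ham : Integrable aminus)
    (hsol : KinSol m aplus aminus I ρ0 ρ) {t : ℝ} (ht : t ∈ I) :
    ContinuousWithinAt (fun s => lpNorm (ρ s) ∞ volume) I t := by
  set U := lpNorm (ρ t) ∞ volume
  have hU : 0 ≤ U := lpNorm_nonneg
  set C := (|m| + (∫ z, |aminus z|) * U + ∫ z, |aplus z|) * U
  have hC : 0 ≤ C := by positivity
  have hK := ae_abs_KRHS_le hap ham (hsol.meas t ht) (hsol.ae_abs_le_lpNorm ht) (m := m)
  have hlip : ∀ᶠ s in 𝓝[I] t,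
      |lpNorm (ρ s) ∞ volume - lpNorm (ρ t) ∞ volume| ≤ (1 + C) * |s - t| := by
    filter_upwards [eventually_ae_norm_sub_sub_smul_le (hsol.hasDeriv t ht) one_pos,
      self_mem_nhdsWithin] with s hrem hs
    refine (abs_lpNorm_sub_lpNorm_le (hsol.memLp_top hs) (hsol.memLp_top ht) le_top).trans
      (lpNorm_top_le_of_ae_norm_le (by positivity) ?_)
    filter_upwards [hrem, hK] with x hx hKx
    simp only [Real.norm_eq_abs, smul_eq_mul, Pi.sub_apply] at hx ⊢
    calc |ρ s x - ρ t x|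
        = |(ρ s x - ρ t x - (s - t) * KRHS m aplus aminus (ρ t) x)
          + (s - t) * KRHS m aplus aminus (ρ t) x| := by rw [sub_add_cancel]
      _ ≤ |ρ s x - ρ t x - (s - t) * KRHS m aplus aminus (ρ t) x|
          + |s - t| * |KRHS m aplus aminus (ρ t) x| := by rw [← abs_mul]; exact abs_add_le _ _
      _ ≤ 1 * |s - t| + |s - t| * C := by gcongr
      _ = (1 + C) * |s - t| := by ring
  rw [ContinuousWithinAt, tendsto_iff_norm_sub_tendsto_zero]
  refine squeeze_zero' (.of_forall fun _ => norm_nonneg _) hlip ?_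
  have hcont : Continuous fun s : ℝ => (1 + C) * |s - t| := by fun_prop
  exact (hcont.tendsto' t 0 (by simp)).mono_left nhdsWithin_le_nhds

lemma eventually_lpNorm_le_max (hm : 0 ≤ m) (hap : Integrable aplus) (ham : Integrable aminus)
    (ham_pos : ∀ᵐ x, 0 ≤ aminus x) (hdom : ∀ᵐ x, aplus x ≤ θ * aminus x)
    (hsol : KinSol m aplus aminus (Ici 0) ρ0 ρ) (hρ_pos : ∀ t ∈ Ici (0 : ℝ), ∀ x, 0 ≤ ρ t x)
    {t : ℝ} (ht : 0 ≤ t) {ε : ℝ} (hε : 0 < ε) :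
    ∀ᶠ s in 𝓝[>] t,
      lpNorm (ρ s) ∞ volume ≤ max (lpNorm (ρ t) ∞ volume) θ + ε * (s - t) := by
  set U := lpNorm (ρ t) ∞ volume
  have hU : 0 ≤ U := lpNorm_nonneg
  have hρU := hsol.ae_abs_le_lpNorm (t := t) ht
  have hρ₀ : ∀ᵐ x, 0 ≤ ρ t x := .of_forall (hρ_pos t ht)
  set A := conv aminus (ρ t)
  have hA₀ : ∀ x, 0 ≤ A x := conv_nonneg ham_pos hρ₀
  have hAU : ∀ x, A x ≤ (∫ z, |aminus z|) * U := fun x =>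
    (le_abs_self _).trans (abs_conv_le ham (hsol.meas t ht) hρU x)
  have hK : ∀ x, KRHS m aplus aminus (ρ t) x ≤ A x * (θ - ρ t x) := fun x =>
    KRHS_le_conv_mul_sub hm (hρ_pos t ht x)
      (conv_le_mul_conv hap ham hdom (hsol.meas t ht) hρ₀ hρU x)
  have hshort : ∀ᶠ s in 𝓝 t, (s - t) * ((∫ z, |aminus z|) * U) ≤ 1 := by
    have hcont : Continuous fun s : ℝ => (s - t) * ((∫ z, |aminus z|) * U) := by fun_prop
    exact (hcont.tendsto' t 0 (by simp)).eventually (ge_mem_nhds zero_lt_one)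
  filter_upwards [nhdsWithin_mono t (Ioi_subset_Ici ht)
      (eventually_ae_norm_sub_sub_smul_le (hsol.hasDeriv t ht) hε),
    self_mem_nhdsWithin, nhdsWithin_le_nhds hshort] with s hrem hts hs
  have hst : 0 ≤ s - t := sub_nonneg.2 (le_of_lt hts)
  refine lpNorm_top_le_of_ae_norm_le (by positivity) ?_
  filter_upwards [hrem, hρU] with x hx hxU
  simp only [Real.norm_eq_abs, smul_eq_mul, abs_of_nonneg hst] at hx ⊢
  have hk : (s - t) * A x ≤ 1 := (mul_le_mul_of_nonneg_left (hAU x) hst).trans hs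
  rw [abs_of_nonneg (hρ_pos s (ht.trans hts.le) x)]
  calc ρ s x ≤ ρ t x + (s - t) * KRHS m aplus aminus (ρ t) x + ε * (s - t) := by
        linarith [(abs_le.1 hx).2]
    _ ≤ ρ t x + (s - t) * A x * (θ - ρ t x) + ε * (s - t) := by
        rw [mul_assoc]; gcongr; exact hK x
    _ ≤ max (ρ t x) θ + ε * (s - t) := by
        gcongr; exact add_mul_sub_le_max (mul_nonneg hst (hA₀ x)) hk
    _ ≤ max U θ + ε * (s - t) := by
        gcongr; exact (le_abs_self _).trans hxU

lemma lpNorm_le_max (hm : 0 ≤ m) (hap : Integrable aplus) (ham : Integrable aminus)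
    (ham_pos : ∀ᵐ x, 0 ≤ aminus x) (hdom : ∀ᵐ x, aplus x ≤ θ * aminus x)
    (hsol : KinSol m aplus aminus (Ici 0) ρ0 ρ) (hρ_pos : ∀ t ∈ Ici (0 : ℝ), ∀ x, 0 ≤ ρ t x)
    {t : ℝ} (ht : 0 ≤ t) :
    lpNorm (ρ t) ∞ volume ≤ max (lpNorm (ρ 0) ∞ volume) θ := by
  have hcont : ContinuousOn (fun s => max (lpNorm (ρ s) ∞ volume) θ) (Icc 0 t) :=
    (ContinuousOn.sup (fun s hs => hsol.continuousWithinAt_lpNorm hap ham hs)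
      continuousOn_const).mono Icc_subset_Ici_self
  refine (le_max_left _ _).trans (image_le_left_of_eventually_le_add_mul hcont ?_ t ⟨ht, le_rfl⟩)
  intro s hs ε hε
  filter_upwards [hsol.eventually_lpNorm_le_max hm hap ham ham_pos hdom hρ_pos hs.1 hε,
    self_mem_nhdsWithin] with r hr hsr
  have : 0 ≤ ε * (r - s) := mul_nonneg hε.le (sub_nonneg.2 (le_of_lt hsr))
  exact max_le hr (by linarith [le_max_right (lpNorm (ρ s) ∞ volume) θ])

end KinSol

theorem statement12_general
    (d : ℕ) (m : ℝ) (hm : 0 ≤ m)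
    (aplus aminus : Rd d → ℝ)
    (hap_int : Integrable aplus volume) (ham_int : Integrable aminus volume)
    (ham_pos : ∀ᵐ x ∂volume, 0 ≤ aminus x)
    (θ : ℝ) (hθ : 0 < θ)
    (hdom : ∀ᵐ x ∂volume, aplus x ≤ θ * aminus x)
    (ρ0 : Rd d → ℝ)
    (hρ0_bdd : ∃ M : ℝ, ∀ x, ρ0 x ≤ M)
    (hρ0_pos : ∀ x, 0 ≤ ρ0 x)
    (ρ : ℝ → Rd d → ℝ)
    (hsol : KinSol m aplus aminus (Set.Ici 0) ρ0 ρ)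
    (hρ_init : ρ 0 = ρ0)
    (hρ_cont : ∀ t ∈ Set.Ici (0 : ℝ), Continuous (ρ t))
    (hρ_pos : ∀ t ∈ Set.Ici (0 : ℝ), ∀ x, 0 ≤ ρ t x)
 :
    (∃ b > (0 : ℝ), ∀ t ∈ Set.Ici (0 : ℝ), ∀ x, ρ t x ≤ b) ∧
      ∀ δ > (0 : ℝ), (∀ x, ρ0 x ≤ θ - δ) →
        ∀ t, 0 < t → ∀ x, ρ t x ≤ θ := by
  have hρ_le : ∀ t ∈ Ici (0 : ℝ), ∀ x, ρ t x ≤ max (lpNorm (ρ 0) ∞ volume) θ := fun t ht x =>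
    (le_abs_self _).trans <| (norm_le_lpNorm_top_of_continuous (hsol.memLp_top ht)
      (hρ_cont t ht) x).trans (hsol.lpNorm_le_max hm hap_int ham_int ham_pos hdom hρ_pos ht)
  have hρ0_le {B : ℝ} (hB : 0 ≤ B) (hρ0B : ∀ x, ρ0 x ≤ B) : lpNorm (ρ 0) ∞ volume ≤ B :=
    lpNorm_top_le_of_ae_norm_le hB <| .of_forall fun x => by
      rw [hρ_init, Real.norm_eq_abs, abs_of_nonneg (hρ0_pos x)]; exact hρ0B x
  obtain ⟨M, hM⟩ := hρ0_bdd
  refine ⟨⟨max M θ, lt_max_of_lt_right hθ, fun t ht x => (hρ_le t ht x).trans ?_⟩, ?_⟩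
  · exact max_le (hρ0_le (hθ.le.trans (le_max_right M θ))
      fun x => (hM x).trans (le_max_left M θ)) (le_max_right M θ)
  · intro δ hδ hρ0θ t ht x
    have hρ0 : lpNorm (ρ 0) ∞ volume ≤ θ := hρ0_le hθ.le fun x => by linarith [hρ0θ x]
    exact (hρ_le t ht.le x).trans (max_le hρ0 le_rfl)

theorem statement12
    (d : ℕ) (hd : 1 ≤ d) (m : ℝ) (hm : 0 ≤ m)
    (aplus aminus : Rd d → ℝ)
    (hap_int : Integrable aplus volume) (ham_int : Integrable aminus volume)
    (hap_bdd : eLpNorm aplus ⊤ volume < ⊤) (ham_bdd : eLpNorm aminus ⊤ volume < ⊤)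
    (hap_even : ∀ᵐ x ∂volume, aplus (-x) = aplus x)
    (ham_even : ∀ᵐ x ∂volume, aminus (-x) = aminus x)
    (hap_pos : ∀ᵐ x ∂volume, 0 ≤ aplus x)
    (ham_pos : ∀ᵐ x ∂volume, 0 ≤ aminus x)
    (θ : ℝ) (hθ : 0 < θ)
    (hdom : ∀ᵐ x ∂volume, aplus x ≤ θ * aminus x)
    (ρ0 : Rd d → ℝ) (hρ0_cont : Continuous ρ0)
    (hρ0_bdd : ∃ M : ℝ, ∀ x, ρ0 x ≤ M)
    (hρ0_pos : ∀ x, 0 ≤ ρ0 x)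
    (ρ : ℝ → Rd d → ℝ)
    (hsol : KinSol m aplus aminus (Set.Ici 0) ρ0 ρ)
    (hρ_init : ρ 0 = ρ0)
    (hρ_cont : ∀ t ∈ Set.Ici (0 : ℝ), Continuous (ρ t))
    (hρ_pos : ∀ t ∈ Set.Ici (0 : ℝ), ∀ x, 0 ≤ ρ t x)
 :
    (∃ b > (0 : ℝ), ∀ t ∈ Set.Ici (0 : ℝ), ∀ x, ρ t x ≤ b) ∧
      ∀ δ > (0 : ℝ), (∀ x, ρ0 x ≤ θ - δ) →
        ∀ t, 0 < t → ∀ x, ρ t x ≤ θ :=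
  statement12_general d m hm aplus aminus hap_int ham_int ham_pos θ hθ hdom ρ0 hρ0_bdd hρ0_pos ρ
    hsol hρ_init hρ_cont hρ_pos
end
end
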